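/- Let m ≥ 3 and let Δ be a graph with vertex set {1, −1, 2, −2, …, m, −m} that is preserved by the group (C2^m)^+ ⋊ Sym(m) ≤ C2 ≀ Sym(m). Then Δ is isomorphic to K_{2m}, the edgeless graph on 2m vertices, mK_2, or the complement of mK_2. In particular, every such graph Δ has motion 2. -/

import Mathlib

open Equiv Pointwise

/-- A graph is vertex-transitive if its automorphism group is transitive on the
vertices. -/
def IsVertexTransitive {V : Type*} (Γ : SimpleGraph V) : Prop :=
  ∀ u v : V, ∃ e : Γ ≃g Γ, e u = v

/-- The motion of a graph: the least number of vertices moved by a non-identity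
automorphism (i.e. the minimal degree of its automorphism group). -/
noncomputable def motion {V : Type*} [Fintype V] [DecidableEq V] (Γ : SimpleGraph V) : ℕ :=
  sInf {n | ∃ e : Γ ≃g Γ, (e.toEquiv : Equiv.Perm V) ≠ 1 ∧
    (Equiv.Perm.support (e.toEquiv : Equiv.Perm V)).card = n}

/-- The element of the imprimitive wreath product determined by a function
`g : ι → Perm Δ` and a permutation `h` of the index set, acting on `Δ × ι` by
`(δ, i) ↦ (g i δ, h i)`. -/
def wreathPerm {Δ ι : Type*} (g : ι → Equiv.Perm Δ) (h : Equiv.Perm ι) :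
    Equiv.Perm (Δ × ι) where
  toFun x := (g x.2 x.1, h x.2)
  invFun x := ((g (h⁻¹ x.2))⁻¹ x.1, h⁻¹ x.2)
  left_inv := by rintro ⟨d, i⟩; simp
  right_inv := by rintro ⟨d, i⟩; simp

/-- The imprimitive wreath product `Y ≀ H` of permutation groups, as a permutation
group on `Δ × ι`.  (The defining set is already a subgroup, so taking the
subgroup closure does not change it.) -/
def wreathProduct {Δ ι : Type*} (Y : Subgroup (Equiv.Perm Δ))
    (H : Subgroup (Equiv.Perm ι)) : Subgroup (Equiv.Perm (Δ × ι)) :=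
  Subgroup.closure {σ | ∃ (g : ι → Equiv.Perm Δ) (h : Equiv.Perm ι),
    (∀ i, g i ∈ Y) ∧ h ∈ H ∧ σ = wreathPerm g h}

/-- The copy `X^ι` of a power of `X` inside the base group of a wreath product,
as a permutation group on `Δ × ι`. -/
def basePower {Δ ι : Type*} (X : Subgroup (Equiv.Perm Δ)) :
    Subgroup (Equiv.Perm (Δ × ι)) :=
  Subgroup.closure {σ | ∃ g : ι → Equiv.Perm Δ, (∀ i, g i ∈ X) ∧ σ = wreathPerm g 1}

/-- Transport of permutations along a bijection, as a group isomorphism. -/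
def permMapEquiv {α β : Type*} (f : α ≃ β) : Equiv.Perm α ≃* Equiv.Perm β where
  toFun g := (f.symm.trans g).trans f
  invFun g := (f.trans g).trans f.symm
  left_inv g := by ext x; simp
  right_inv g := by ext x; simp
  map_mul' g₁ g₂ := by ext x; simp [Equiv.Perm.mul_apply]

/-- Transport of a permutation group along a bijection of the underlying sets.
`mapPermGroup f G` is the permutation group on `β` corresponding to `G` under the
relabelling `f`; thus `G` and `mapPermGroup f G` are permutation isomorphic. -/
def mapPermGroup {α β : Type*} (f : α ≃ β) (G : Subgroup (Equiv.Perm α)) :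
    Subgroup (Equiv.Perm β) :=
  Subgroup.map (permMapEquiv f).toMonoidHom G

/-- The full wreath product `C₂ ≀ Sym(m)` acting on `Fin 2 × Fin m` (the set
`{1, -1, …, m, -m}`), where the `i`-th base coordinate swaps `(0,i)` and `(1,i)`
and `Sym(m)` permutes the pairs. -/
def fullC2Wreath (m : ℕ) : Subgroup (Equiv.Perm (Fin 2 × Fin m)) :=
  Subgroup.closure {σ | ∃ (g : Fin m → Equiv.Perm (Fin 2)) (h : Equiv.Perm (Fin m)),
    σ = wreathPerm g h}

/-- The subgroup `{1} × Sym(m)` of `C₂ ≀ Sym(m)`. -/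
def symPart (m : ℕ) : Subgroup (Equiv.Perm (Fin 2 × Fin m)) :=
  Subgroup.closure {σ | ∃ h : Equiv.Perm (Fin m), σ = wreathPerm (fun _ => 1) h}

/-- The superflip `τ`: the base-group element swapping `i` and `-i` for every `i`. -/
def superflip (m : ℕ) : Equiv.Perm (Fin 2 × Fin m) :=
  wreathPerm (fun _ => Equiv.swap 0 1) 1

/-- The subgroup `⟨τ⟩ × Sym(m)` of `C₂ ≀ Sym(m)`. -/
def flipSym (m : ℕ) : Subgroup (Equiv.Perm (Fin 2 × Fin m)) :=
  Subgroup.zpowers (superflip m) ⊔ symPart m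

/-- The augmentation subgroup `(C₂^m)⁺ × {1}` of the base group of `C₂ ≀ Sym(m)`:
tuples with an even number of non-trivial entries. -/
def evenBase (m : ℕ) : Subgroup (Equiv.Perm (Fin 2 × Fin m)) :=
  Subgroup.closure {σ | ∃ g : Fin m → Equiv.Perm (Fin 2),
    Even (Finset.univ.filter (fun i => g i ≠ 1)).card ∧ σ = wreathPerm g 1}

/-- The subgroup `(C₂^m)⁺ ⋊ Sym(m)` of `C₂ ≀ Sym(m)`. -/
def evenWreath (m : ℕ) : Subgroup (Equiv.Perm (Fin 2 × Fin m)) :=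
  evenBase m ⊔ symPart m

/-- The full automorphism group of a graph, as a subgroup of the symmetric group on
its vertex set. -/
def autGroup {V : Type*} (Γ : SimpleGraph V) : Subgroup (Equiv.Perm V) where
  carrier := {σ | ∀ u v : V, Γ.Adj (σ u) (σ v) ↔ Γ.Adj u v}
  one_mem' := by intro u v; rfl
  mul_mem' := by
    intro a b ha hb u v
    simp only [Set.mem_setOf_eq] at *
    rw [Equiv.Perm.mul_apply, Equiv.Perm.mul_apply, ha, hb]
  inv_mem' := by
    intro a ha u v
    simp only [Set.mem_setOf_eq] at *
    conv_rhs => rw [← (a.apply_symm_apply u : a (a⁻¹ u) = u), ← (a.apply_symm_apply v : a (a⁻¹ v) = v)]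
    rw [ha]
    rfl

/-- The 5-cycle `C₅`, as a graph on `ZMod 5`. -/
def C5 : SimpleGraph (ZMod 5) := SimpleGraph.fromRel (fun x y => x - y = 1)

/-- The perfect matching `m K₂` on the vertex set `Fin 2 × Fin m`. -/
def matching (m : ℕ) : SimpleGraph (Fin 2 × Fin m) :=
  SimpleGraph.fromRel (fun x y => x.2 = y.2 ∧ x.1 ≠ y.1)

/-- The Cartesian product `K_m □ K₂` on the vertex set `Fin 2 × Fin m`. -/
def prism (m : ℕ) : SimpleGraph (Fin 2 × Fin m) :=
  SimpleGraph.fromRel (fun x y => (x.2 = y.2 ∧ x.1 ≠ y.1) ∨ (x.1 = y.1 ∧ x.2 ≠ y.2))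

/-- The complete bipartite graph `K_{m,m}` on the vertex set `Fin 2 × Fin m`. -/
def completeBip (m : ℕ) : SimpleGraph (Fin 2 × Fin m) :=
  SimpleGraph.fromRel (fun x y => x.1 ≠ y.1)

/-!
The group acts on the pairs of distinct vertices with exactly two orbits: the pairs `{i, -i}`
and the pairs meeting two different blocks. `Sym(m)` moves any block, or ordered pair of blocks,
to any other, and the sign of a single vertex can be changed by an even sign change whose second
flip is spent on a third block, which exists because `m ≥ 3`. Hence `Δ` is determined by whether
it contains the first orbit and whether it contains the second, giving the four graphs. All four
are invariant under the transposition `(i -i)`, so the motion is `2`, the least possible.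
-/

open SimpleGraph

lemma wreathPerm_apply {Δ ι : Type*} (g : ι → Perm Δ) (h : Perm ι) (a : Δ) (i : ι) :
    wreathPerm g h (a, i) = (g i a, h i) := rfl

lemma exists_perm_apply_eq_apply_eq {α : Type*} [DecidableEq α] {i j i' j' : α} (hij : i ≠ j)
    (hij' : i' ≠ j') : ∃ σ : Perm α, σ i = i' ∧ σ j = j' := by
  have hi' : i' ≠ swap i i' j := fun h ↦ hij <| (swap i i').injective (by rw [← h, swap_apply_left])
  refine ⟨swap (swap i i' j) j' * swap i i', ?_, ?_⟩
  · rw [Perm.mul_apply, swap_apply_left, swap_apply_of_ne_of_ne hi' hij']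
  · rw [Perm.mul_apply, swap_apply_left]

lemma exists_ne_ne_of_three_le_card {α : Type*} [Fintype α] [DecidableEq α]
    (h : 3 ≤ Fintype.card α) (i j : α) : ∃ k, k ≠ i ∧ k ≠ j := by
  obtain ⟨k, -, hk⟩ := Finset.exists_mem_notMem_of_card_lt_card (s := {i, j}) (t := Finset.univ)
    (by rw [Finset.card_univ]; exact Finset.card_le_two.trans_lt h)
  simp only [Finset.mem_insert, Finset.mem_singleton, not_or] at hk
  exact ⟨k, hk⟩

lemma swap_apply_snd_of_snd_eq {α β : Type*} [DecidableEq α] [DecidableEq β] {x y : α × β}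
    (h : x.2 = y.2) (z : α × β) : (swap x y z).2 = z.2 := by
  rw [swap_apply_def]
  split_ifs with hx hy
  · rw [hx, h]
  · rw [hy, h]
  · rfl

lemma motion_eq_two_of_swap_mem_autGroup {V : Type*} [Fintype V] [DecidableEq V]
    {Γ : SimpleGraph V} {x y : V} (hxy : x ≠ y) (h : swap x y ∈ autGroup Γ) : motion Γ = 2 := by
  let e : Γ ≃g Γ := ⟨swap x y, h _ _⟩
  have hmem : 2 ∈ {n | ∃ e : Γ ≃g Γ, (e.toEquiv : Perm V) ≠ 1 ∧
      (Perm.support (e.toEquiv : Perm V)).card = n} :=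
    ⟨e, fun h1 ↦ hxy (swap_eq_one_iff.mp h1), Perm.card_support_swap hxy⟩
  refine le_antisymm (Nat.sInf_le hmem) (le_csInf ⟨2, hmem⟩ ?_)
  rintro n ⟨e, he, rfl⟩
  exact Perm.one_lt_card_support_of_ne_one he

section EvenWreath

variable {m : ℕ} {Δ : SimpleGraph (Fin 2 × Fin m)}

lemma matching_adj {x y : Fin 2 × Fin m} : (matching m).Adj x y ↔ x.2 = y.2 ∧ x ≠ y := by
  simp only [matching, fromRel_adj, ne_eq, Prod.ext_iff]
  tauto

lemma compl_matching_adj {x y : Fin 2 × Fin m} : (matching m)ᶜ.Adj x y ↔ x.2 ≠ y.2 := by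
  rw [compl_adj, matching_adj]
  tauto

lemma wreathPerm_one_mem_symPart (h : Perm (Fin m)) : wreathPerm (fun _ ↦ 1) h ∈ symPart m :=
  Subgroup.subset_closure ⟨h, rfl⟩

lemma wreathPerm_flip_mem_evenBase (S : Finset (Fin m)) (hS : Even S.card) :
    wreathPerm (fun t ↦ if t ∈ S then swap 0 1 else 1) 1 ∈ evenBase m := by
  refine Subgroup.subset_closure ⟨_, ?_, rfl⟩
  convert hS using 2
  ext t
  by_cases ht : t ∈ S <;> simp [ht, swap_eq_one_iff]

lemma adj_perm_snd_iff (hΔ : symPart m ≤ autGroup Δ) (h : Perm (Fin m)) (a b : Fin 2)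
    (i j : Fin m) : Δ.Adj (a, h i) (b, h j) ↔ Δ.Adj (a, i) (b, j) :=
  hΔ (wreathPerm_one_mem_symPart h) (a, i) (b, j)

lemma adj_swap_fst_iff (hΔ : evenBase m ≤ autGroup Δ) {i j k : Fin m} (hij : i ≠ j)
    (hki : k ≠ i) (hkj : k ≠ j) (a b : Fin 2) :
    Δ.Adj (swap 0 1 a, i) (b, j) ↔ Δ.Adj (a, i) (b, j) := by
  have hS : Even ({i, k} : Finset (Fin m)).card := by rw [Finset.card_pair hki.symm]; exact even_two
  simpa [wreathPerm_apply, hij.symm, hkj.symm] using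
    hΔ (wreathPerm_flip_mem_evenBase _ hS) (a, i) (b, j)

lemma adj_within_pair_iff (hΔ : symPart m ≤ autGroup Δ) {a b a' b' : Fin 2} (hab : a ≠ b)
    (hab' : a' ≠ b') (i j : Fin m) : Δ.Adj (a, i) (b, i) ↔ Δ.Adj (a', j) (b', j) := by
  rw [← adj_perm_snd_iff hΔ (swap i j), swap_apply_left]
  fin_cases a <;> fin_cases b <;> fin_cases a' <;> fin_cases b' <;> simp_all [adj_comm]

lemma adj_across_pairs_iff_zero (hΔ : evenBase m ≤ autGroup Δ) (hm : 3 ≤ m) {i j : Fin m}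
    (hij : i ≠ j) (a b : Fin 2) : Δ.Adj (a, i) (b, j) ↔ Δ.Adj (0, i) (0, j) := by
  obtain ⟨k, hki, hkj⟩ := exists_ne_ne_of_three_le_card (by simpa using hm) i j
  have fst_zero : ∀ (a b : Fin 2) {i j : Fin m}, i ≠ j → k ≠ i → k ≠ j →
      (Δ.Adj (a, i) (b, j) ↔ Δ.Adj (0, i) (b, j)) := by
    intro a b i j hij hki hkj
    fin_cases a
    · rfl
    · exact (adj_swap_fst_iff hΔ hij hki hkj 1 b).symm
  rw [fst_zero a b hij hki hkj, adj_comm, fst_zero b 0 hij.symm hkj hki, adj_comm]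

lemma adj_across_pairs_iff (hΔ : evenWreath m ≤ autGroup Δ) (hm : 3 ≤ m) {i j i' j' : Fin m}
    (hij : i ≠ j) (hij' : i' ≠ j') (a b a' b' : Fin 2) :
    Δ.Adj (a, i) (b, j) ↔ Δ.Adj (a', i') (b', j') := by
  obtain ⟨hbase, hsym⟩ := sup_le_iff.mp hΔ
  obtain ⟨σ, rfl, rfl⟩ := exists_perm_apply_eq_apply_eq hij hij'
  rw [adj_across_pairs_iff_zero hbase hm hij, adj_across_pairs_iff_zero hbase hm hij',
    adj_perm_snd_iff hsym]

theorem adj_iff_of_evenWreath_le (hΔ : evenWreath m ≤ autGroup Δ) (hm : 3 ≤ m) {i j : Fin m}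
    (hij : i ≠ j) (x y : Fin 2 × Fin m) : Δ.Adj x y ↔
      (x.2 = y.2 ∧ x ≠ y ∧ Δ.Adj (0, i) (1, i)) ∨ (x.2 ≠ y.2 ∧ Δ.Adj (0, i) (0, j)) := by
  obtain ⟨a, k⟩ := x
  obtain ⟨b, l⟩ := y
  by_cases hkl : k = l
  · subst hkl
    by_cases hab : a = b
    · simp [hab]
    · rw [adj_within_pair_iff (sup_le_iff.mp hΔ).2 hab zero_ne_one k i]
      simp [hab]
  · rw [adj_across_pairs_iff hΔ hm hkl hij a b 0 0]
    simp [hkl]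

lemma eq_top_or_bot_or_matching_or_compl {p q : Prop}
    (h : ∀ x y, Δ.Adj x y ↔ (x.2 = y.2 ∧ x ≠ y ∧ p) ∨ (x.2 ≠ y.2 ∧ q)) :
    Δ = ⊤ ∨ Δ = ⊥ ∨ Δ = matching m ∨ Δ = (matching m)ᶜ := by
  by_cases hp : p <;> by_cases hq : q
  · left
    ext x y
    rw [h, top_adj]
    by_cases hxy : x.2 = y.2
    · simp [hp, hxy]
    · simp [hq, hxy, ne_of_apply_ne Prod.snd hxy]
  · right; right; left
    ext x y
    rw [h, matching_adj]
    simp [hp, hq]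
  · right; right; right
    ext x y
    rw [h, compl_matching_adj]
    simp [hp, hq]
  · right; left
    ext x y
    rw [h]
    simp [hp, hq]

lemma mem_autGroup_of_forall_snd_eq {p q : Prop}
    (h : ∀ x y, Δ.Adj x y ↔ (x.2 = y.2 ∧ x ≠ y ∧ p) ∨ (x.2 ≠ y.2 ∧ q)) {σ : Perm (Fin 2 × Fin m)}
    (hσ : ∀ x, (σ x).2 = x.2) : σ ∈ autGroup Δ := by
  intro x y
  simp only [h, hσ, σ.injective.ne_iff]

end EvenWreath

/-- Lemma `lem:graphs_easyTrans`.  A graph on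
`{1, -1, …, m, -m}` (`m ≥ 3`) preserved by `(C₂^m)⁺ ⋊ Sym(m)` is isomorphic to
`K_{2m}`, the edgeless graph, `m K₂`, or the complement of `m K₂`; in particular
every such graph has motion 2. -/
theorem statement_16 (m : ℕ) (hm : 3 ≤ m) (Δ : SimpleGraph (Fin 2 × Fin m))
    (hpres : evenWreath m ≤ autGroup Δ) :
    (Nonempty (Δ ≃g (⊤ : SimpleGraph (Fin 2 × Fin m))) ∨
     Nonempty (Δ ≃g (⊥ : SimpleGraph (Fin 2 × Fin m))) ∨
     Nonempty (Δ ≃g matching m) ∨ Nonempty (Δ ≃g (matching m)ᶜ)) ∧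
    motion Δ = 2 := by
  let i₀ : Fin m := ⟨0, by omega⟩
  have hadj := adj_iff_of_evenWreath_le hpres hm (i := i₀) (j := ⟨1, by omega⟩) (by simp [i₀])
  refine ⟨?_, motion_eq_two_of_swap_mem_autGroup (x := (0, i₀)) (y := (1, i₀)) (by simp)
    (mem_autGroup_of_forall_snd_eq hadj (swap_apply_snd_of_snd_eq rfl))⟩
  rcases eq_top_or_bot_or_matching_or_compl hadj with rfl | rfl | rfl | rfl
  · exact Or.inl ⟨Iso.refl⟩
  · exact Or.inr <| Or.inl ⟨Iso.refl⟩
  · exact Or.inr <| Or.inr <| Or.inl ⟨Iso.refl⟩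
  · exact Or.inr <| Or.inr <| Or.inr ⟨Iso.refl⟩
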